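/- For all real numbers K ≥ 1, D ≥ 1 and λ ∈ [0,1), setting ℓ = 1/(K·D) + 2λ/(D·(1−λ)), one has 1/(K(1+λ) + (1−λ)) = 1/(K + (ℓ·K²·D + K)/(ℓ·K·D + 2K − 1)). (This is the rate–load-ratio trade-off of the time-sharing scheme.) -/
import Mathlib


/-- The rate–load-ratio trade-off of the time-sharing scheme: with
`ℓ = 1/(K·D) + 2λ/(D·(1-λ))`, one has
`1/(K(1+λ)+(1-λ)) = 1/(K + (ℓK²D + K)/(ℓKD + 2K - 1))`. -/
theorem time_sharing_rate_load_tradeoff (K D lam : ℝ)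
    (hK : K ≥ 1) (hD : D ≥ 1) (hlam : lam ∈ Set.Ico (0:ℝ) 1) :
    1 / (K * (1 + lam) + (1 - lam)) =
      1 / (K + ((1 / (K * D) + 2 * lam / (D * (1 - lam))) * K ^ 2 * D + K) /
        ((1 / (K * D) + 2 * lam / (D * (1 - lam))) * K * D + 2 * K - 1)) := by
  obtain ⟨h0, h1⟩ := hlam
  have hK0 : K > 0 := by linarith
  have hD0 : D > 0 := by linarith
  have hl : 1 - lam > 0 := by linarith
  have hden : (1 / (K * D) + 2 * lam / (D * (1 - lam))) * K * D + 2 * K - 1 = 2 * K / (1 - lam) := by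
    field_simp
    ring
  rw [hden]
  have hnum : (1 / (K * D) + 2 * lam / (D * (1 - lam))) * K ^ 2 * D + K
      = (2 * K * (1 - lam) + 2 * lam * K ^ 2) / (1 - lam) := by
    field_simp
    ring
  rw [hnum]
  congr 1
  field_simp
  ring
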